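/- For the polynomial P_4(z) = z + (7/6)z² + (2/3)z³ + (1/6)z⁴ and every real t, one has |P_4(e^{it})| ≥ 1/3, with equality when t = π. -/

import Mathlib

/-
On the unit circle `P₄(z) = z (z + 2) (z² + 2z + 3) / 6`, and with `x = Re z` one has
`|z + 2|² = 5 + 4x` and `|z² + 2z + 3|² = 4 (3x² + 4x + 2)`. Hence
`36 |P₄(z)|² - 4 = 4 (x + 1) (12x² + 19x + 9)`, which is nonnegative for `x ≥ -1` because the
quadratic factor has negative discriminant; it vanishes at `z = -1`.
-/

/-- The polynomial `P₄(z) = z + (7/6)z² + (2/3)z³ + (1/6)z⁴`. -/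
noncomputable def P4 (z : ℂ) : ℂ := z + (7 / 6) * z ^ 2 + (2 / 3) * z ^ 3 + (1 / 6) * z ^ 4

namespace Complex

lemma re_sq_add_im_sq_of_norm_eq_one {z : ℂ} (hz : ‖z‖ = 1) : z.re ^ 2 + z.im ^ 2 = 1 := by
  have h := Complex.sq_norm z
  rw [hz, normSq_apply] at h
  linarith

lemma neg_one_le_re_of_norm_eq_one {z : ℂ} (hz : ‖z‖ = 1) : -1 ≤ z.re := by
  simpa [hz] using (abs_le.mp (abs_re_le_norm z)).1

lemma sq_norm_add_two_of_norm_eq_one {z : ℂ} (hz : ‖z‖ = 1) :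
    ‖z + 2‖ ^ 2 = 5 + 4 * z.re := by
  have hre := re_sq_add_im_sq_of_norm_eq_one hz
  rw [Complex.sq_norm, normSq_apply]
  simp only [add_re, add_im, re_ofNat, im_ofNat]
  nlinarith

lemma sq_norm_sq_add_two_mul_add_three_of_norm_eq_one {z : ℂ} (hz : ‖z‖ = 1) :
    ‖z ^ 2 + 2 * z + 3‖ ^ 2 = 4 * (3 * z.re ^ 2 + 4 * z.re + 2) := by
  have him : z.im ^ 2 = 1 - z.re ^ 2 := by linarith [re_sq_add_im_sq_of_norm_eq_one hz]
  rw [Complex.sq_norm, normSq_apply]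
  simp only [add_re, add_im, mul_re, mul_im, sq, re_ofNat, im_ofNat]
  linear_combination (z.im ^ 2 + z.re ^ 2 + 4 * z.re - 1) * him

end Complex

lemma one_le_mul_quadratic_of_neg_one_le {x : ℝ} (hx : -1 ≤ x) :
    1 ≤ (5 + 4 * x) * (3 * x ^ 2 + 4 * x + 2) := by
  have hquad : 0 ≤ 12 * x ^ 2 + 19 * x + 9 := by nlinarith [sq_nonneg (24 * x + 19)]
  nlinarith [mul_nonneg (neg_le_iff_add_nonneg.mp hx) hquad]

lemma P4_eq_mul (z : ℂ) : P4 z = z * (z + 2) * (z ^ 2 + 2 * z + 3) / 6 := by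
  unfold P4
  ring

lemma norm_P4_of_norm_eq_one {z : ℂ} (hz : ‖z‖ = 1) :
    ‖P4 z‖ = ‖z + 2‖ * ‖z ^ 2 + 2 * z + 3‖ / 6 := by
  rw [P4_eq_mul, norm_div, norm_mul, norm_mul, hz, one_mul]
  norm_num

theorem one_third_le_norm_P4_of_norm_eq_one {z : ℂ} (hz : ‖z‖ = 1) : 1 / 3 ≤ ‖P4 z‖ := by
  have hsq : 2 ^ 2 ≤ (‖z + 2‖ * ‖z ^ 2 + 2 * z + 3‖) ^ 2 := by
    rw [mul_pow, Complex.sq_norm_add_two_of_norm_eq_one hz,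
      Complex.sq_norm_sq_add_two_mul_add_three_of_norm_eq_one hz]
    nlinarith [one_le_mul_quadratic_of_neg_one_le (Complex.neg_one_le_re_of_norm_eq_one hz)]
  have h2 := (pow_le_pow_iff_left₀ zero_le_two (by positivity) two_ne_zero).mp hsq
  rw [norm_P4_of_norm_eq_one hz]
  linarith

theorem stmt12 :
    (∀ t : ℝ, 1 / 3 ≤ ‖P4 (Complex.exp (Complex.I * t))‖) ∧
      ‖P4 (Complex.exp (Complex.I * Real.pi))‖ = 1 / 3 := by
  refine ⟨fun t ↦ one_third_le_norm_P4_of_norm_eq_one (Complex.norm_exp_I_mul_ofReal t), ?_⟩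
  rw [mul_comm, Complex.exp_pi_mul_I, P4]
  norm_num
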